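/- arXiv:2008.07972 — 3 statements merged into one kernel-verified Lean document; each statement's English description precedes it below -/
import Mathlib

section
/- Let M ∈ ℝ^{m×n} with compact SVD M = UΣVᵀ, singular values Σ_{11} ≥ Σ_{22} ≥ ⋯ ≥ Σ_{qq} (q = min(m,n)), and let p ≤ q, μ ≥ 0. Then the matrix L̂ = U(:,1:p) Σ̂_μ V(:,1:p)ᵀ, where Σ̂_μ is diagonal with (Σ̂_μ)_{ii} = max(Σ_{ii} − μ, 0), minimizes (1/2)‖L − M‖_F² + μ‖L‖_* over all L ∈ ℝ^{m×n} with rank(L) ≤ p. -/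
open Matrix Finset Filter

/-- Frobenius norm of a real matrix. -/
noncomputable def frob {m n : ℕ} (A : Matrix (Fin m) (Fin n) ℝ) : ℝ :=
  Real.sqrt (∑ i, ∑ j, (A i j) ^ 2)

/-- Nuclear norm: sum of the singular values, i.e. of the square roots of the
eigenvalues of `Aᵀ * A`. -/
noncomputable def nuclearNorm {m n : ℕ} (A : Matrix (Fin m) (Fin n) ℝ) : ℝ :=
  ∑ i, Real.sqrt ((Matrix.isHermitian_conjTranspose_mul_self A).eigenvalues i)

/-- `σ` is the (decreasingly ordered) vector of singular values of a compact SVD of `A`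
with inner dimension `q`. -/
def HasSVD {m n q : ℕ} (A : Matrix (Fin m) (Fin n) ℝ) (σ : Fin q → ℝ) : Prop :=
  (∀ i, 0 ≤ σ i) ∧ Antitone σ ∧
    ∃ (U : Matrix (Fin m) (Fin q) ℝ) (V : Matrix (Fin n) (Fin q) ℝ),
      Uᵀ * U = 1 ∧ Vᵀ * V = 1 ∧ A = U * Matrix.diagonal σ * Vᵀ

section Helpers
open Polynomial

lemma frob_sq {m n : ℕ} (A : Matrix (Fin m) (Fin n) ℝ) :
    frob A ^ 2 = ∑ i, ∑ j, (A i j) ^ 2 := by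
  rw [frob, Real.sq_sqrt]
  positivity

lemma frob_sq_eq_trace {m n : ℕ} (A : Matrix (Fin m) (Fin n) ℝ) :
    frob A ^ 2 = (Aᵀ * A).trace := by
  rw [frob_sq, Matrix.trace, Finset.sum_comm]
  simp [Matrix.diag, Matrix.mul_apply, sq]

lemma sum_castLE {p q : ℕ} (hpq : p ≤ q) (f : Fin q → ℝ) :
    ∑ j : Fin p, f (Fin.castLE hpq j) = ∑ j : Fin q, if (j : ℕ) < p then f j else 0 := by
  classical
  set F : ℕ → ℝ := fun i => if h : i < q then (if i < p then f ⟨i, h⟩ else 0) else 0 with hF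
  have h1 : ∑ j : Fin q, (if (j : ℕ) < p then f j else 0) = ∑ i ∈ Finset.range q, F i := by
    rw [← Fin.sum_univ_eq_sum_range]
    refine Finset.sum_congr rfl fun j _ => ?_
    simp [hF, j.isLt]
  have h2 : ∑ j : Fin p, f (Fin.castLE hpq j) = ∑ i ∈ Finset.range p, F i := by
    rw [← Fin.sum_univ_eq_sum_range]
    refine Finset.sum_congr rfl fun j _ => ?_
    have hjq : (j : ℕ) < q := lt_of_lt_of_le j.isLt hpq
    simp [hF, hjq, j.isLt, Fin.castLE]
  have h3 : ∑ i ∈ Finset.range p, F i = ∑ i ∈ Finset.range q, F i := by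
    apply Finset.sum_subset (Finset.range_subset_range.mpr hpq)
    intro i hi hip
    simp only [Finset.mem_range] at hi hip
    simp [hF, hi, hip]
  rw [h1, h2, h3]

lemma proj_ineq {r s : ℕ} (P : Matrix (Fin r) (Fin s) ℝ) (h : P * Pᵀ = 1) (x : Fin s → ℝ) :
    ∑ i, (P.mulVec x i) ^ 2 ≤ ∑ k, (x k) ^ 2 := by
  set y := P.mulVec x with hy
  set z := Pᵀ.mulVec y with hz
  have hxz : x ⬝ᵥ z = y ⬝ᵥ y := by
    rw [hz, Matrix.dotProduct_mulVec, Matrix.vecMul_transpose, hy]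
  have hzx : z ⬝ᵥ x = y ⬝ᵥ y := by
    rw [dotProduct_comm, hxz]
  have hzz : z ⬝ᵥ z = y ⬝ᵥ y := by
    rw [hz, Matrix.dotProduct_mulVec, Matrix.vecMul_transpose, Matrix.mulVec_mulVec, h,
      Matrix.one_mulVec]
  have h0 : 0 ≤ (x - z) ⬝ᵥ (x - z) := by
    apply Finset.sum_nonneg
    intro i _
    exact mul_self_nonneg _
  rw [sub_dotProduct, dotProduct_sub, dotProduct_sub, hxz, hzx, hzz] at h0
  have hxx : x ⬝ᵥ x = ∑ k, (x k) ^ 2 := by simp [dotProduct, sq]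
  have hyy : y ⬝ᵥ y = ∑ i, (P.mulVec x i) ^ 2 := by simp [dotProduct, sq, hy]
  linarith [h0]

lemma lp_bound {q p : ℕ} (hpq : p ≤ q) (β c : Fin q → ℝ)
    (hβ0 : ∀ j, 0 ≤ β j) (hβa : Antitone β)
    (hc0 : ∀ j, 0 ≤ c j) (hc1 : ∀ j, c j ≤ 1) (hcs : ∑ j, c j ≤ (p : ℝ)) :
    ∑ j, β j * c j ≤ ∑ j : Fin q, if (j : ℕ) < p then β j else 0 := by
  rcases lt_or_ge p q with hlt | hge
  · set jp : Fin q := ⟨p, hlt⟩ with hjp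
    -- cardinality: ∑ ite 1 = p
    have hcard : ∑ j : Fin q, (if (j : ℕ) < p then (1 : ℝ) else 0) = (p : ℝ) := by
      rw [← sum_castLE hpq (fun _ => (1 : ℝ))]
      simp
    -- split βc
    have hsplit : ∀ j : Fin q, β j * c j =
        (if (j : ℕ) < p then β j * c j else 0) + (if (j : ℕ) < p then 0 else β j * c j) := by
      intro j; split_ifs <;> ring
    rw [Finset.sum_congr rfl (fun j _ => hsplit j), Finset.sum_add_distrib]
    -- bound tail by pivot
    have htail : ∑ j : Fin q, (if (j : ℕ) < p then (0:ℝ) else β j * c j) ≤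
        ∑ j : Fin q, (if (j : ℕ) < p then 0 else β jp * c j) := by
      apply Finset.sum_le_sum
      intro j _
      split_ifs with h
      · exact le_rfl
      · exact mul_le_mul_of_nonneg_right (hβa (by
          simp only [hjp, Fin.le_def]; omega)) (hc0 j)
    have htail2 : ∑ j : Fin q, (if (j : ℕ) < p then (0:ℝ) else β jp * c j) =
        β jp * ((∑ j, c j) - ∑ j : Fin q, (if (j : ℕ) < p then c j else 0)) := by
      rw [mul_sub, Finset.mul_sum, Finset.mul_sum, ← Finset.sum_sub_distrib]
      refine Finset.sum_congr rfl fun j _ => ?_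
      split_ifs <;> ring
    have htail3 : β jp * ((∑ j, c j) - ∑ j : Fin q, (if (j : ℕ) < p then c j else 0)) ≤
        β jp * ((p : ℝ) - ∑ j : Fin q, (if (j : ℕ) < p then c j else 0)) := by
      apply mul_le_mul_of_nonneg_left (by linarith) (hβ0 jp)
    -- final termwise comparison
    have hfin : ∑ j : Fin q, (if (j : ℕ) < p then β j * c j else 0) +
        β jp * ((p : ℝ) - ∑ j : Fin q, (if (j : ℕ) < p then c j else 0)) ≤
        ∑ j : Fin q, (if (j : ℕ) < p then β j else 0) := by
      rw [← hcard, mul_sub, Finset.mul_sum, Finset.mul_sum, ← Finset.sum_sub_distrib,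
        ← Finset.sum_add_distrib]
      apply Finset.sum_le_sum
      intro j _
      split_ifs with h
      · have h1 : β jp ≤ β j := hβa (by simp only [hjp, Fin.le_def]; omega)
        have h2 : c j ≤ 1 := hc1 j
        have h3 : 0 ≤ β jp := hβ0 jp
        nlinarith
      · simp
    linarith
  · -- p ≥ q : every index satisfies j < p
    have hall : ∀ j : Fin q, (j : ℕ) < p := fun j => lt_of_lt_of_le j.isLt hge
    calc ∑ j, β j * c j ≤ ∑ j, β j := by
          apply Finset.sum_le_sum
          intro j _
          nlinarith [hβ0 j, hc1 j, hc0 j]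
      _ = ∑ j : Fin q, if (j : ℕ) < p then β j else 0 := by
          refine Finset.sum_congr rfl fun j _ => ?_
          rw [if_pos (hall j)]

lemma charpoly_conj {N : ℕ} (W : Matrix (Fin N) (Fin N) ℝ) (c : Fin N → ℝ)
    (hW : Wᵀ * W = 1) :
    (W * Matrix.diagonal c * Wᵀ).charpoly = ∏ j, (X - Polynomial.C (c j)) := by
  have hW2 : W * Wᵀ = 1 := mul_eq_one_comm.mp hW
  set f : ℝ →+* ℝ[X] := Polynomial.C
  set W' : Matrix (Fin N) (Fin N) ℝ[X] := f.mapMatrix W with hW'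
  have hWt : W'ᵀ = f.mapMatrix Wᵀ := by
    rw [hW', RingHom.mapMatrix_apply, RingHom.mapMatrix_apply]
    exact (Matrix.transpose_map).symm
  have hW'2 : W' * W'ᵀ = 1 := by
    rw [hW', hWt, ← _root_.map_mul, hW2, _root_.map_one]
  have hcm : charmatrix (W * Matrix.diagonal c * Wᵀ) =
      W' * charmatrix (Matrix.diagonal c) * W'ᵀ := by
    rw [charmatrix, charmatrix, Matrix.mul_sub, Matrix.sub_mul]
    congr 1
    · symm
      rw [(Matrix.scalar_commute X (fun r => Commute.all X r) W').symm.eq, Matrix.mul_assoc,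
        hW'2, Matrix.mul_one]
    · rw [hW', hWt, ← _root_.map_mul, ← _root_.map_mul]
  have hdiag : charmatrix (Matrix.diagonal c) =
      Matrix.diagonal (fun i => X - Polynomial.C (c i)) := by
    apply Matrix.ext
    intro i j
    by_cases h : i = j
    · subst h
      rw [charmatrix_apply_eq, Matrix.diagonal_apply_eq (fun i => X - Polynomial.C (c i)),
        Matrix.diagonal_apply_eq c]
    · rw [charmatrix_apply_ne _ _ _ h,
        Matrix.diagonal_apply_ne (fun i => X - Polynomial.C (c i)) h,
        Matrix.diagonal_apply_ne c h, Polynomial.C_0, neg_zero]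
  have hdet : W'.det * W'ᵀ.det = 1 := by
    rw [← Matrix.det_mul, hW'2, Matrix.det_one]
  calc (W * Matrix.diagonal c * Wᵀ).charpoly
      = (W' * charmatrix (Matrix.diagonal c) * W'ᵀ).det := by rw [Matrix.charpoly, hcm]
    _ = W'.det * (charmatrix (Matrix.diagonal c)).det * W'ᵀ.det := by
        rw [Matrix.det_mul, Matrix.det_mul]
    _ = (charmatrix (Matrix.diagonal c)).det * (W'.det * W'ᵀ.det) := by ring
    _ = ∏ j, (X - Polynomial.C (c j)) := by
        rw [hdet, mul_one, hdiag, Matrix.det_diagonal]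

lemma sum_sqrt_eig_of_decomp {N : ℕ} {A : Matrix (Fin N) (Fin N) ℝ} (hA : A.IsHermitian)
    (W : Matrix (Fin N) (Fin N) ℝ) (c : Fin N → ℝ) (hW : Wᵀ * W = 1)
    (hdec : A = W * Matrix.diagonal c * Wᵀ) :
    ∑ i, Real.sqrt (hA.eigenvalues i) = ∑ i, Real.sqrt (c i) := by
  set P : Matrix (Fin N) (Fin N) ℝ := ↑hA.eigenvectorUnitary with hP
  have hstar : star P = Pᵀ := by
    rw [Matrix.star_eq_conjTranspose, Matrix.conjTranspose_eq_transpose_of_trivial]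
  have hPu : Pᵀ * P = 1 := by
    rw [← hstar]
    exact Unitary.coe_star_mul_self hA.eigenvectorUnitary
  have hspec : A = P * Matrix.diagonal hA.eigenvalues * Pᵀ := by
    have h := hA.spectral_theorem
    rw [Unitary.conjStarAlgAut_apply] at h
    rw [← hstar]; exact h
  have h1 : A.charpoly = ∏ j, (X - Polynomial.C (hA.eigenvalues j)) := by
    conv_lhs => rw [hspec]
    exact charpoly_conj P hA.eigenvalues hPu
  have h2 : A.charpoly = ∏ j, (X - Polynomial.C (c j)) := by
    rw [hdec]; exact charpoly_conj W c hW
  have key : ∀ (f : Fin N → ℝ), ∏ j, (X - Polynomial.C (f j)) =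
      (Multiset.map (fun a => X - Polynomial.C a) (Multiset.map f Finset.univ.val)).prod := by
    intro f
    rw [Multiset.map_map]
    rfl
  have hroots : Multiset.map hA.eigenvalues Finset.univ.val = Multiset.map c Finset.univ.val := by
    have r1 := Polynomial.roots_multiset_prod_X_sub_C (Multiset.map hA.eigenvalues Finset.univ.val)
    have r2 := Polynomial.roots_multiset_prod_X_sub_C (Multiset.map c Finset.univ.val)
    rw [← key] at r1 r2
    rw [← r1, ← r2, ← h1, ← h2]
  have sumkey : ∀ (f : Fin N → ℝ), ∑ i, Real.sqrt (f i) =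
      (Multiset.map Real.sqrt (Multiset.map f Finset.univ.val)).sum := by
    intro f
    rw [Multiset.map_map]
    rfl
  rw [sumkey, sumkey, hroots]

lemma gram_UDV {m n q : ℕ} (U : Matrix (Fin m) (Fin q) ℝ) (V : Matrix (Fin n) (Fin q) ℝ)
    (c : Fin q → ℝ) (hU : Uᵀ * U = 1) :
    (U * Matrix.diagonal c * Vᵀ)ᵀ * (U * Matrix.diagonal c * Vᵀ) =
      V * Matrix.diagonal (fun j => c j * c j) * Vᵀ := by
  rw [Matrix.transpose_mul, Matrix.transpose_mul, Matrix.transpose_transpose,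
    Matrix.diagonal_transpose]
  calc V * (Matrix.diagonal c * Uᵀ) * (U * Matrix.diagonal c * Vᵀ)
      = V * Matrix.diagonal c * (Uᵀ * U) * Matrix.diagonal c * Vᵀ := by
        simp only [Matrix.mul_assoc]
    _ = V * Matrix.diagonal (fun j => c j * c j) * Vᵀ := by
        rw [hU, Matrix.mul_one, Matrix.mul_assoc V, Matrix.diagonal_mul_diagonal,
          Matrix.mul_assoc]

lemma frob_sq_UDV {m n q : ℕ} (U : Matrix (Fin m) (Fin q) ℝ) (V : Matrix (Fin n) (Fin q) ℝ)
    (c : Fin q → ℝ) (hU : Uᵀ * U = 1) (hV : Vᵀ * V = 1) :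
    frob (U * Matrix.diagonal c * Vᵀ) ^ 2 = ∑ j, (c j) ^ 2 := by
  rw [frob_sq_eq_trace, gram_UDV U V c hU, Matrix.trace_mul_comm, ← Matrix.mul_assoc, hV,
    Matrix.one_mul, Matrix.trace_diagonal]
  simp [sq]

lemma fin_mk_castLE {p q : ℕ} (hpq : p ≤ q) (j : Fin p)
    (h : ((Fin.castLE hpq j : Fin q) : ℕ) < p) :
    (⟨((Fin.castLE hpq j : Fin q) : ℕ), h⟩ : Fin p) = j := Fin.ext (by simp)

lemma nuclear_UDV {m n q : ℕ} (hqn : q ≤ n)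
    (U : Matrix (Fin m) (Fin q) ℝ) (V : Matrix (Fin n) (Fin q) ℝ)
    (c : Fin q → ℝ) (hc : ∀ j, 0 ≤ c j) (hU : Uᵀ * U = 1) (hV : Vᵀ * V = 1) :
    nuclearNorm (U * Matrix.diagonal c * Vᵀ) = ∑ j, c j := by
  classical
  set v : Fin n → EuclideanSpace ℝ (Fin n) :=
    fun j => WithLp.toLp 2 (fun i => if h : (j : ℕ) < q then V i ⟨(j : ℕ), h⟩ else 0) with hv
  set s : Set (Fin n) := {j | (j : ℕ) < q} with hs
  have hVcol : ∀ (j j' : Fin q), ∑ i, V i j * V i j' = if j = j' then (1:ℝ) else 0 := by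
    intro j j'
    have := congrFun (congrFun hV j) j'
    simpa [Matrix.mul_apply, Matrix.one_apply] using this
  have horth : Orthonormal ℝ (s.restrict v) := by
    rw [orthonormal_iff_ite]
    intro ⟨j, hj⟩ ⟨j', hj'⟩
    have hjq : (j : ℕ) < q := hj
    have hjq' : (j' : ℕ) < q := hj'
    rw [PiLp.inner_apply]
    simp only [Set.restrict, Set.domRestrict_apply, RCLike.inner_apply, conj_trivial, hv, WithLp.ofLp_toLp, dif_pos hjq, dif_pos hjq']
    rw [hVcol ⟨(j':ℕ), hjq'⟩ ⟨(j:ℕ), hjq⟩]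
    simp [Fin.ext_iff, Subtype.ext_iff, eq_comm]
  obtain ⟨b, hb⟩ := Orthonormal.exists_orthonormalBasis_extension_of_card_eq
    (by simp [finrank_euclideanSpace]) horth
  set Wt : Matrix (Fin n) (Fin n) ℝ := fun i j => b j i with hWt
  have hWtU : Wtᵀ * Wt = 1 := by
    apply Matrix.ext
    intro j j'
    have hbo := b.orthonormal
    rw [orthonormal_iff_ite] at hbo
    have h2 := hbo j j'
    rw [PiLp.inner_apply] at h2
    simp only [RCLike.inner_apply, conj_trivial] at h2
    rw [Matrix.mul_apply]
    simp only [Matrix.transpose_apply, hWt, Matrix.one_apply]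
    rw [← h2]
    exact Finset.sum_congr rfl fun x _ => mul_comm _ _
  set ct : Fin n → ℝ := fun j => if h : (j : ℕ) < q then (c ⟨(j : ℕ), h⟩) * (c ⟨(j : ℕ), h⟩) else 0
    with hct
  have hdec : (U * Matrix.diagonal c * Vᵀ)ᵀ * (U * Matrix.diagonal c * Vᵀ) =
      Wt * Matrix.diagonal ct * Wtᵀ := by
    rw [gram_UDV U V c hU]
    apply Matrix.ext
    intro i k
    have lhs1 : (V * Matrix.diagonal (fun j => c j * c j) * Vᵀ) i k =
        ∑ j : Fin q, V i j * (c j * c j) * V k j := by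
      rw [Matrix.mul_apply]
      refine Finset.sum_congr rfl fun x _ => ?_
      rw [Matrix.mul_diagonal, Matrix.transpose_apply]
    have rhs1 : (Wt * Matrix.diagonal ct * Wtᵀ) i k =
        ∑ j : Fin n, Wt i j * ct j * Wt k j := by
      rw [Matrix.mul_apply]
      refine Finset.sum_congr rfl fun x _ => ?_
      rw [Matrix.mul_diagonal, Matrix.transpose_apply]
    rw [lhs1, rhs1]
    have key := sum_castLE hqn (fun j : Fin n => Wt i j * ct j * Wt k j)
    have key2 : ∑ j : Fin n, Wt i j * ct j * Wt k j =
        ∑ j : Fin n, if (j : ℕ) < q then Wt i j * ct j * Wt k j else 0 := by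
      refine Finset.sum_congr rfl fun j _ => ?_
      split_ifs with h
      · rfl
      · simp [hct, h]
    rw [key2, ← key]
    refine Finset.sum_congr rfl fun j _ => ?_
    have hjs : (Fin.castLE hqn j) ∈ s := by
      simp only [hs, Set.mem_setOf_eq, Fin.coe_castLE]
      exact j.isLt
    have hWcol : ∀ i', Wt i' (Fin.castLE hqn j) = V i' j := by
      intro i'
      simp only [hWt]
      rw [hb _ hjs]
      simp only [hv, PiLp.toLp_apply]
      rw [dif_pos (show ((Fin.castLE hqn j : Fin n) : ℕ) < q from j.isLt),
        fin_mk_castLE hqn j j.isLt]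
    have hctj : ct (Fin.castLE hqn j) = c j * c j := by
      simp only [hct]
      rw [dif_pos (show ((Fin.castLE hqn j : Fin n) : ℕ) < q from j.isLt),
        fin_mk_castLE hqn j j.isLt]
    rw [hWcol i, hWcol k, hctj]
  have hmain := sum_sqrt_eig_of_decomp (Matrix.isHermitian_conjTranspose_mul_self
    (U * Matrix.diagonal c * Vᵀ)) Wt ct hWtU hdec
  rw [nuclearNorm, hmain]
  have : ∀ i : Fin n, Real.sqrt (ct i) = (if (i : ℕ) < q then
      (fun j : Fin n => if h : (j:ℕ) < q then c ⟨(j:ℕ), h⟩ else 0) i else 0) := by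
    intro i
    by_cases h : (i : ℕ) < q
    · simp only [hct, dif_pos h, if_pos h]
      exact Real.sqrt_mul_self (hc _)
    · simp [hct, h]
  rw [Finset.sum_congr rfl (fun i _ => this i), ← sum_castLE hqn]
  refine Finset.sum_congr rfl fun j _ => ?_
  rw [dif_pos (show ((Fin.castLE hqn j : Fin n) : ℕ) < q from j.isLt),
    fin_mk_castLE hqn j j.isLt]

lemma diag_proj_le {a N : ℕ} (X : Matrix (Fin a) (Fin N) ℝ) (P : Matrix (Fin a) (Fin a) ℝ)
    (hP : Pᵀ * P = P) (i : Fin N) : (Xᵀ * P * X) i i ≤ (Xᵀ * X) i i := by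
  have hPs : Pᵀ = P := by
    conv_lhs => rw [← hP, Matrix.transpose_mul, Matrix.transpose_transpose, hP]
  have hPP : P * P = P := by
    nth_rewrite 1 [← hPs]
    exact hP
  have key : (X - P * X)ᵀ * (X - P * X) = Xᵀ * X - Xᵀ * P * X := by
    rw [Matrix.transpose_sub, Matrix.transpose_mul, hPs, Matrix.sub_mul, Matrix.mul_sub,
      Matrix.mul_sub]
    have h1 : Xᵀ * P * (P * X) = Xᵀ * (P * X) := by
      rw [Matrix.mul_assoc Xᵀ P (P * X), ← Matrix.mul_assoc P P X, hPP]
    rw [h1, ← Matrix.mul_assoc Xᵀ P X]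
    abel
  have h0 : 0 ≤ ((X - P * X)ᵀ * (X - P * X)) i i := by
    rw [Matrix.mul_apply]
    apply Finset.sum_nonneg
    intro k _
    rw [Matrix.transpose_apply]
    exact mul_self_nonneg _
  rw [key, Matrix.sub_apply] at h0
  linarith

set_option maxHeartbeats 1000000 in
theorem lower_bound {m n q p : ℕ} (hpq : p ≤ q) (μ : ℝ) (hμ : 0 ≤ μ)
    (M : Matrix (Fin m) (Fin n) ℝ)
    (U : Matrix (Fin m) (Fin q) ℝ) (V : Matrix (Fin n) (Fin q) ℝ)
    (σ : Fin q → ℝ) (hσ0 : ∀ i, 0 ≤ σ i) (hσa : Antitone σ)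
    (hU : Uᵀ * U = 1) (hV : Vᵀ * V = 1)
    (hM : M = U * Matrix.diagonal σ * Vᵀ)
    (L : Matrix (Fin m) (Fin n) ℝ) (hrank : L.rank ≤ p) :
    (1/2) * ∑ j, (σ j)^2
      - (1/2) * ∑ j : Fin q, (if (j:ℕ) < p then (max (σ j - μ) 0)^2 else 0)
      ≤ (1/2) * frob (L - M) ^ 2 + μ * nuclearNorm L := by
  classical
  set τ : Fin q → ℝ := fun j => max (σ j - μ) 0 with hτ
  have hτ0 : ∀ j, 0 ≤ τ j := fun j => le_max_right _ _
  have hτa : Antitone τ := fun i j hij => max_le_max (by linarith [hσa hij]) le_rfl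
  have hβa : Antitone (fun j => τ j ^ 2) := by
    intro i j hij
    exact pow_le_pow_left₀ (hτ0 j) (hτa hij) 2
  set hH := Matrix.isHermitian_conjTranspose_mul_self L with hHdef
  set lam : Fin n → ℝ := hH.eigenvalues with hlamdef
  have hpsd : (Lᵀ * L).PosSemidef := by
    rw [← Matrix.conjTranspose_eq_transpose_of_trivial]
    exact Matrix.posSemidef_conjTranspose_mul_self L
  have hlam0 : ∀ i, 0 ≤ lam i := fun i => hpsd.eigenvalues_nonneg i
  set W : Matrix (Fin n) (Fin n) ℝ := ↑hH.eigenvectorUnitary with hWdef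
  have hstar : star W = Wᵀ := by
    rw [Matrix.star_eq_conjTranspose, Matrix.conjTranspose_eq_transpose_of_trivial]
  have hWU : Wᵀ * W = 1 := by
    rw [← hstar]; exact Unitary.coe_star_mul_self hH.eigenvectorUnitary
  have hWW : W * Wᵀ = 1 := mul_eq_one_comm.mp hWU
  have hspec : Lᵀ * L = W * Matrix.diagonal lam * Wᵀ := by
    have h := hH.spectral_theorem
    rw [Unitary.conjStarAlgAut_apply] at h
    rw [← hstar]; exact h
  set s : Fin n → ℝ := fun i => Real.sqrt (lam i) with hsdef
  have hs0 : ∀ i, 0 ≤ s i := fun i => Real.sqrt_nonneg _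
  have hs2 : ∀ i, s i ^ 2 = lam i := fun i => Real.sq_sqrt (hlam0 i)
  have hnucL : nuclearNorm L = ∑ i, s i := rfl
  set X : Matrix (Fin m) (Fin n) ℝ := L * W with hXdef
  set K : Matrix (Fin n) (Fin q) ℝ := Xᵀ * U with hKdef
  set J : Matrix (Fin n) (Fin q) ℝ := Wᵀ * V with hJdef
  have hXX : Xᵀ * X = Matrix.diagonal lam := by
    rw [hXdef, Matrix.transpose_mul]
    calc Wᵀ * Lᵀ * (L * W) = Wᵀ * (Lᵀ * L) * W := by simp only [Matrix.mul_assoc]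
      _ = (Wᵀ * W) * Matrix.diagonal lam * (Wᵀ * W) := by
          rw [hspec]; simp only [Matrix.mul_assoc]
      _ = Matrix.diagonal lam := by rw [hWU, Matrix.one_mul, Matrix.mul_one]
  have hXcol : ∀ i, ∑ k, (X k i)^2 = lam i := by
    intro i
    have h := congrFun (congrFun hXX i) i
    rw [Matrix.mul_apply, Matrix.diagonal_apply_eq] at h
    rw [← h]
    exact Finset.sum_congr rfl fun k _ => by rw [Matrix.transpose_apply, sq]
  have hXzero : ∀ i, lam i = 0 → ∀ k, X k i = 0 := by
    intro i h0 k
    have h := hXcol i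
    rw [h0] at h
    have := (Finset.sum_eq_zero_iff_of_nonneg (fun k _ => sq_nonneg (X k i))).mp h k
      (Finset.mem_univ k)
    exact pow_eq_zero_iff (n := 2) (by norm_num) |>.mp this
  set H : Matrix (Fin n) (Fin n) ℝ := Xᵀ * (M * W) with hHmat
  have hHKJ : H = K * Matrix.diagonal σ * Jᵀ := by
    simp only [hHmat, hKdef, hJdef, hXdef, hM, Matrix.transpose_mul,
      Matrix.transpose_transpose, Matrix.mul_assoc]
  have hHdiag : ∀ i, H i i = ∑ j, K i j * σ j * J i j := by
    intro i
    rw [hHKJ, Matrix.mul_apply]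
    exact Finset.sum_congr rfl fun j _ => by
      rw [Matrix.mul_diagonal, Matrix.transpose_apply]
  have htr : ∑ i, H i i = ∑ i, ∑ j, L i j * M i j := by
    have e1 : H = Wᵀ * ((Lᵀ * M) * W) := by
      rw [hHmat, hXdef, Matrix.transpose_mul]
      simp only [Matrix.mul_assoc]
    have e2 : H.trace = (Lᵀ * M).trace := by
      rw [e1, Matrix.trace_mul_comm, Matrix.mul_assoc, hWW, Matrix.mul_one]
    have e3 : (Lᵀ * M).trace = ∑ i, ∑ j, L i j * M i j := by
      simp only [Matrix.trace, Matrix.diag, Matrix.mul_apply, Matrix.transpose_apply]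
      rw [Finset.sum_comm]
    calc ∑ i, H i i = H.trace := rfl
      _ = (Lᵀ * M).trace := e2
      _ = ∑ i, ∑ j, L i j * M i j := e3
  -- row bounds
  have hK2 : ∀ i, ∑ j, (K i j)^2 ≤ lam i := by
    intro i
    have hproj : (U * Uᵀ)ᵀ * (U * Uᵀ) = U * Uᵀ := by
      rw [Matrix.transpose_mul, Matrix.transpose_transpose]
      calc U * Uᵀ * (U * Uᵀ) = U * (Uᵀ * U) * Uᵀ := by simp only [Matrix.mul_assoc]
        _ = U * Uᵀ := by rw [hU, Matrix.mul_one]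
    have h := diag_proj_le X (U * Uᵀ) hproj i
    rw [hXX, Matrix.diagonal_apply_eq] at h
    have e : (Xᵀ * (U * Uᵀ) * X) i i = ∑ j, (K i j)^2 := by
      have : Xᵀ * (U * Uᵀ) * X = K * Kᵀ := by
        simp only [hKdef, Matrix.transpose_mul, Matrix.transpose_transpose, Matrix.mul_assoc]
      rw [this, Matrix.mul_apply]
      exact Finset.sum_congr rfl fun j _ => by rw [Matrix.transpose_apply, sq]
    rw [e] at h
    exact h
  have hJ2 : ∀ i, ∑ j, (J i j)^2 ≤ 1 := by
    intro i
    have hproj : (V * Vᵀ)ᵀ * (V * Vᵀ) = V * Vᵀ := by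
      rw [Matrix.transpose_mul, Matrix.transpose_transpose]
      calc V * Vᵀ * (V * Vᵀ) = V * (Vᵀ * V) * Vᵀ := by simp only [Matrix.mul_assoc]
        _ = V * Vᵀ := by rw [hV, Matrix.mul_one]
    have h := diag_proj_le W (V * Vᵀ) hproj i
    rw [hWU, Matrix.one_apply_eq] at h
    have e : (Wᵀ * (V * Vᵀ) * W) i i = ∑ j, (J i j)^2 := by
      have : Wᵀ * (V * Vᵀ) * W = J * Jᵀ := by
        simp only [hJdef, Matrix.transpose_mul, Matrix.transpose_transpose, Matrix.mul_assoc]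
      rw [this, Matrix.mul_apply]
      exact Finset.sum_congr rfl fun j _ => by rw [Matrix.transpose_apply, sq]
    rw [e] at h
    exact h
  -- column bounds
  set g : Fin n → ℝ := fun i => if lam i = 0 then 0 else 1 / s i with hgdef
  have hg0 : ∀ i, 0 ≤ g i := by
    intro i
    simp only [hgdef]
    split_ifs
    · exact le_rfl
    · positivity
  have hglam : ∀ i, lam i ≠ 0 → g i ^ 2 * lam i = 1 := by
    intro i h0
    have hlpos : 0 < lam i := lt_of_le_of_ne (hlam0 i) (Ne.symm h0)
    have hspos : 0 < s i := Real.sqrt_pos.mpr hlpos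
    rw [hgdef]
    simp only [if_neg h0]
    rw [div_pow, one_pow, hs2 i]
    field_simp
  have hKg2 : ∀ j, ∑ i, (g i * K i j)^2 ≤ 1 := by
    intro j
    set Q : Matrix (Fin m) (Fin n) ℝ := X * Matrix.diagonal g with hQdef
    have hQQ : Qᵀ * Q = Matrix.diagonal (fun i => if lam i = 0 then 0 else 1) := by
      rw [hQdef, Matrix.transpose_mul, Matrix.diagonal_transpose]
      calc Matrix.diagonal g * Xᵀ * (X * Matrix.diagonal g)
          = Matrix.diagonal g * (Xᵀ * X) * Matrix.diagonal g := by simp only [Matrix.mul_assoc]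
        _ = Matrix.diagonal (fun i => g i * lam i * g i) := by
            rw [hXX, Matrix.diagonal_mul_diagonal, Matrix.diagonal_mul_diagonal]
        _ = Matrix.diagonal (fun i => if lam i = 0 then 0 else 1) := by
            apply congrArg Matrix.diagonal
            funext i
            by_cases h0 : lam i = 0
            · simp [hgdef, h0]
            · have hlpos : 0 < lam i := lt_of_le_of_ne (hlam0 i) (Ne.symm h0)
              have hspos : 0 < s i := Real.sqrt_pos.mpr hlpos
              simp only [hgdef, if_neg h0]
              field_simp
              nlinarith [hs2 i]
    have hproj : (Q * Qᵀ)ᵀ * (Q * Qᵀ) = Q * Qᵀ := by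
      rw [Matrix.transpose_mul, Matrix.transpose_transpose]
      have hQE : Q * (Qᵀ * Q) = Q := by
        rw [hQQ, hQdef, Matrix.mul_assoc, Matrix.diagonal_mul_diagonal]
        have hge : (fun i => g i * (if lam i = 0 then (0:ℝ) else 1)) = g := by
          funext i
          by_cases h0 : lam i = 0 <;> simp [hgdef, h0]
        rw [show X * Matrix.diagonal (fun i => g i * (if lam i = 0 then (0:ℝ) else 1))
            = X * Matrix.diagonal g from by rw [hge]]
      calc Q * Qᵀ * (Q * Qᵀ) = Q * (Qᵀ * Q) * Qᵀ := by simp only [Matrix.mul_assoc]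
        _ = Q * Qᵀ := by rw [hQE]
    have h := diag_proj_le U (Q * Qᵀ) hproj j
    have hUU : (Uᵀ * U) j j = 1 := by rw [hU, Matrix.one_apply_eq]
    rw [hUU] at h
    have e : (Uᵀ * (Q * Qᵀ) * U) j j = ∑ i, (g i * K i j)^2 := by
      have e1 : Uᵀ * (Q * Qᵀ) * U = (Qᵀ * U)ᵀ * (Qᵀ * U) := by
        simp only [Matrix.transpose_mul, Matrix.transpose_transpose, Matrix.mul_assoc]
      have e2 : Qᵀ * U = Matrix.diagonal g * K := by
        simp only [hQdef, hKdef, Matrix.transpose_mul, Matrix.diagonal_transpose,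
          Matrix.mul_assoc]
      rw [e1, e2, Matrix.mul_apply]
      refine Finset.sum_congr rfl fun i _ => ?_
      rw [Matrix.transpose_apply, Matrix.diagonal_mul, sq]
    rw [e] at h
    exact h
  have hJcol : ∀ j, ∑ i, (J i j)^2 = 1 := by
    intro j
    have e : Jᵀ * J = 1 := by
      rw [hJdef, Matrix.transpose_mul, Matrix.transpose_transpose]
      calc Vᵀ * W * (Wᵀ * V) = Vᵀ * (W * Wᵀ) * V := by simp only [Matrix.mul_assoc]
        _ = 1 := by rw [hWW, Matrix.mul_one, hV]
    have h := congrFun (congrFun e j) j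
    rw [Matrix.mul_apply, Matrix.one_apply_eq] at h
    rw [← h]
    exact Finset.sum_congr rfl fun i _ => by rw [Matrix.transpose_apply, sq]
  -- the weights e i j
  set E : Fin n → Fin q → ℝ := fun i j => ((g i * K i j)^2 + (J i j)^2) / 2 with hEdef
  have hE0 : ∀ i j, 0 ≤ E i j := fun i j => by positivity
  have hErow : ∀ i, lam i ≠ 0 → ∑ j, E i j ≤ 1 := by
    intro i h0
    rw [hEdef]
    have h1 : ∑ j, (g i * K i j)^2 ≤ 1 := by
      have e : ∑ j, (g i * K i j)^2 = g i ^2 * ∑ j, (K i j)^2 := by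
        rw [Finset.mul_sum]
        exact Finset.sum_congr rfl fun j _ => by ring
      rw [e]
      calc g i ^2 * ∑ j, (K i j)^2 ≤ g i ^2 * lam i := by
            apply mul_le_mul_of_nonneg_left (hK2 i) (sq_nonneg _)
        _ = 1 := hglam i h0
    have h2 := hJ2 i
    have : ∑ j, ((g i * K i j)^2 + (J i j)^2) / 2
        = ((∑ j, (g i * K i j)^2) + ∑ j, (J i j)^2) / 2 := by
      rw [← Finset.sum_add_distrib, ← Finset.sum_div]
    rw [this]
    linarith
  set cc : Fin q → ℝ := fun j => ∑ i, (if lam i = 0 then 0 else E i j) with hccdef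
  have hcc0 : ∀ j, 0 ≤ cc j := by
    intro j
    apply Finset.sum_nonneg
    intro i _
    split_ifs
    · exact le_rfl
    · exact hE0 i j
  have hcc1 : ∀ j, cc j ≤ 1 := by
    intro j
    have h1 : cc j ≤ ∑ i, E i j := by
      apply Finset.sum_le_sum
      intro i _
      split_ifs
      · exact hE0 i j
      · exact le_rfl
    have h2 : ∑ i, E i j = ((∑ i, (g i * K i j)^2) + ∑ i, (J i j)^2) / 2 := by
      rw [hEdef, ← Finset.sum_add_distrib, ← Finset.sum_div]
    have h3 := hKg2 j
    have h4 := hJcol j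
    rw [h2] at h1
    linarith
  have hccsum : ∑ j, cc j ≤ (p : ℝ) := by
    have h1 : ∑ j, cc j = ∑ i : Fin n, (if lam i = 0 then 0 else ∑ j, E i j) := by
      rw [hccdef, Finset.sum_comm]
      refine Finset.sum_congr rfl fun i _ => ?_
      split_ifs with h0
      · simp
      · rfl
    have h2 : ∑ i : Fin n, (if lam i = 0 then (0:ℝ) else ∑ j, E i j)
        ≤ ∑ i : Fin n, (if lam i = 0 then (0:ℝ) else 1) := by
      apply Finset.sum_le_sum
      intro i _
      split_ifs with h0
      · exact le_rfl
      · exact hErow i h0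
    have h3 : ∑ i : Fin n, (if lam i = 0 then (0:ℝ) else 1) = (L.rank : ℝ) := by
      have e1 : L.rank = Fintype.card {i // lam i ≠ 0} := by
        rw [← Matrix.rank_transpose_mul_self L]
        exact hH.rank_eq_card_non_zero_eigs
      have e2 : ∑ i : Fin n, (if lam i = 0 then (0:ℝ) else 1)
          = ∑ i : Fin n, (if lam i ≠ 0 then (1:ℝ) else 0) := by
        refine Finset.sum_congr rfl fun i _ => ?_
        by_cases h0 : lam i = 0 <;> simp [h0]
      rw [e1, e2, Fintype.card_subtype, Finset.sum_boole]
    have h4 : (L.rank : ℝ) ≤ (p : ℝ) := by exact_mod_cast hrank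
    rw [h1]
    linarith
  -- key per-index inequality
  have hkey : ∀ i : Fin n,
      -(1/2) * (if lam i = 0 then 0 else ∑ j, τ j ^2 * E i j)
        ≤ 1/2 * lam i - H i i + μ * s i := by
    intro i
    by_cases h0 : lam i = 0
    · have hH0 : H i i = 0 := by
        rw [hHmat, Matrix.mul_apply]
        apply Finset.sum_eq_zero
        intro k _
        rw [Matrix.transpose_apply, hXzero i h0 k, zero_mul]
      have hsz : s i = 0 := by rw [hsdef]; simp [h0]
      rw [if_pos h0, hH0, h0, hsz]
      norm_num
    · have hlpos : 0 < lam i := lt_of_le_of_ne (hlam0 i) (Ne.symm h0)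
      have hspos : 0 < s i := Real.sqrt_pos.mpr hlpos
      rw [if_neg h0]
      set x : ℝ := H i i / s i with hxdef
      have hHx : H i i = s i * x := by
        rw [hxdef]; field_simp
      have hgi : g i = 1 / s i := by
        simp only [hgdef]
        rw [if_neg h0]
      have hxval : x = ∑ j, (g i * K i j) * σ j * J i j := by
        rw [hxdef, hHdiag i, Finset.sum_div]
        refine Finset.sum_congr rfl fun j _ => ?_
        rw [hgi]
        field_simp
      set z : ℝ := ∑ j, τ j * E i j with hzdef
      have hz0 : 0 ≤ z := Finset.sum_nonneg fun j _ => mul_nonneg (hτ0 j) (hE0 i j)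
      have h1 : x ≤ ∑ j, σ j * E i j := by
        rw [hxval]
        apply Finset.sum_le_sum
        intro j _
        have hab : (g i * K i j) * J i j ≤ E i j := by
          rw [hEdef]
          nlinarith [sq_nonneg (g i * K i j - J i j)]
        calc (g i * K i j) * σ j * J i j = σ j * ((g i * K i j) * J i j) := by ring
          _ ≤ σ j * E i j := mul_le_mul_of_nonneg_left hab (hσ0 j)
      have hrow_i : ∑ j, E i j ≤ 1 := hErow i h0
      have hsum_eq : ∑ j, (σ j - μ) * E i j = ∑ j, σ j * E i j - μ * ∑ j, E i j := by
        rw [Finset.mul_sum, ← Finset.sum_sub_distrib]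
        exact Finset.sum_congr rfl fun j _ => by ring
      have h3 : ∑ j, (σ j - μ) * E i j ≤ z := by
        rw [hzdef]
        apply Finset.sum_le_sum
        intro j _
        exact mul_le_mul_of_nonneg_right (le_max_left _ _) (hE0 i j)
      have hmue : μ * ∑ j, E i j ≤ μ := by
        calc μ * ∑ j, E i j ≤ μ * 1 := mul_le_mul_of_nonneg_left hrow_i hμ
          _ = μ := mul_one μ
      have hxz : x - μ ≤ z := by linarith
      have hzsq : z ^ 2 ≤ ∑ j, τ j ^2 * E i j := by
        have cs := Finset.sum_mul_sq_le_sq_mul_sq Finset.univ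
          (fun j => τ j * Real.sqrt (E i j)) (fun j => Real.sqrt (E i j))
        have e1 : ∑ j, (τ j * Real.sqrt (E i j)) * Real.sqrt (E i j) = z := by
          rw [hzdef]
          refine Finset.sum_congr rfl fun j _ => ?_
          rw [mul_assoc, Real.mul_self_sqrt (hE0 i j)]
        have e2 : ∑ j, (τ j * Real.sqrt (E i j))^2 = ∑ j, τ j ^2 * E i j := by
          refine Finset.sum_congr rfl fun j _ => ?_
          rw [mul_pow, Real.sq_sqrt (hE0 i j)]
        have e3 : ∑ j, (Real.sqrt (E i j))^2 = ∑ j, E i j := by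
          refine Finset.sum_congr rfl fun j _ => ?_
          rw [Real.sq_sqrt (hE0 i j)]
        rw [e1, e2, e3] at cs
        have hnn : 0 ≤ ∑ j, τ j ^2 * E i j :=
          Finset.sum_nonneg fun j _ => mul_nonneg (sq_nonneg _) (hE0 i j)
        nlinarith [cs]
      set t : ℝ := max (x - μ) 0 with htdef
      have ht0 : 0 ≤ t := le_max_right _ _
      have htx : x - μ ≤ t := le_max_left _ _
      have htz : t ≤ z := max_le hxz hz0
      have ht2 : t^2 ≤ z^2 := by nlinarith
      have hst : s i * (x - μ) ≤ s i * t := mul_le_mul_of_nonneg_left htx hspos.le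
      have hsq := sq_nonneg (s i - t)
      have hls : lam i = s i ^ 2 := (hs2 i).symm
      nlinarith [hzsq]
  -- assemble
  have hfrobM : frob M ^2 = ∑ j, σ j ^2 := by
    rw [hM]; exact frob_sq_UDV U V σ hU hV
  have hfrobL : frob L ^2 = ∑ i, lam i := by
    rw [frob_sq_eq_trace, hspec, Matrix.trace_mul_comm, ← Matrix.mul_assoc, hWU,
      Matrix.one_mul, Matrix.trace_diagonal]
  have hfrob : frob (L - M)^2 = frob L^2 - 2*(∑ i, ∑ j, L i j * M i j) + frob M^2 := by
    simp only [frob_sq, Matrix.sub_apply, Finset.mul_sum]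
    rw [← Finset.sum_sub_distrib, ← Finset.sum_add_distrib]
    refine Finset.sum_congr rfl fun i _ => ?_
    rw [← Finset.sum_sub_distrib, ← Finset.sum_add_distrib]
    refine Finset.sum_congr rfl fun j _ => ?_
    ring
  have hsum1 : ∑ i, (1/2 * lam i - H i i + μ * s i)
      = 1/2 * (∑ i, lam i) - (∑ i, H i i) + μ * (∑ i, s i) := by
    rw [Finset.sum_add_distrib, Finset.sum_sub_distrib, ← Finset.mul_sum, ← Finset.mul_sum]
  have hswap : ∑ i : Fin n, (if lam i = 0 then 0 else ∑ j, τ j ^2 * E i j)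
      = ∑ j, τ j ^2 * cc j := by
    have e1 : ∀ i : Fin n, (if lam i = 0 then (0:ℝ) else ∑ j, τ j ^2 * E i j)
        = ∑ j, τ j ^2 * (if lam i = 0 then 0 else E i j) := by
      intro i
      split_ifs with h0
      · simp
      · rfl
    rw [Finset.sum_congr rfl (fun i _ => e1 i), Finset.sum_comm]
    refine Finset.sum_congr rfl fun j _ => ?_
    rw [hccdef, Finset.mul_sum]
  have hlp := lp_bound hpq (fun j => τ j ^2) cc (fun j => sq_nonneg _) hβa hcc0 hcc1 hccsum
  have hsumkey : -(1/2) * (∑ j, τ j ^2 * cc j) ≤ ∑ i, (1/2 * lam i - H i i + μ * s i) := by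
    rw [← hswap]
    have := Finset.sum_le_sum (fun i (_ : i ∈ Finset.univ) => hkey i)
    calc -(1/2) * (∑ i : Fin n, (if lam i = 0 then 0 else ∑ j, τ j ^2 * E i j))
        = ∑ i : Fin n, -(1/2) * (if lam i = 0 then 0 else ∑ j, τ j ^2 * E i j) := by
          rw [Finset.mul_sum]
      _ ≤ ∑ i, (1/2 * lam i - H i i + μ * s i) := this
  rw [hnucL, hfrob, hfrobM, hfrobL]
  rw [hsum1] at hsumkey
  rw [htr] at hsumkey
  have hτgoal : ∑ j : Fin q, (if (j:ℕ) < p then (max (σ j - μ) 0)^2 else 0)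
      = ∑ j : Fin q, (if (j:ℕ) < p then τ j ^2 else 0) := rfl
  rw [hτgoal]
  linarith [hlp, hsumkey]

end Helpers

set_option maxHeartbeats 1000000 in
/-- Soft-thresholding the top-`p` singular values of `M` solves the rank-constrained
nuclear-norm proximal problem `min (1/2)‖L − M‖_F² + μ‖L‖_*` s.t. `rank L ≤ p`. -/
theorem prox_rank_constrained_nuclear {m n q p : ℕ}
    (hq : q = min m n) (hpq : p ≤ q) (μ : ℝ) (hμ : 0 ≤ μ)
    (M : Matrix (Fin m) (Fin n) ℝ)
    (U : Matrix (Fin m) (Fin q) ℝ) (V : Matrix (Fin n) (Fin q) ℝ)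
    (σ : Fin q → ℝ) (hσ0 : ∀ i, 0 ≤ σ i) (hσa : Antitone σ)
    (hU : Uᵀ * U = 1) (hV : Vᵀ * V = 1)
    (hM : M = U * Matrix.diagonal σ * Vᵀ) :
    let Lhat : Matrix (Fin m) (Fin n) ℝ :=
      (U.submatrix id (Fin.castLE hpq)) *
        Matrix.diagonal (fun i : Fin p => max (σ (Fin.castLE hpq i) - μ) 0) *
        (V.submatrix id (Fin.castLE hpq))ᵀ
    Lhat.rank ≤ p ∧
      ∀ L : Matrix (Fin m) (Fin n) ℝ, L.rank ≤ p →
        (1/2) * frob (Lhat - M) ^ 2 + μ * nuclearNorm Lhat ≤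
          (1/2) * frob (L - M) ^ 2 + μ * nuclearNorm L := by
  classical
  intro Lhat
  have hqn : q ≤ n := by rw [hq]; exact min_le_right m n
  set td : Fin q → ℝ := fun j => if (j : ℕ) < p then max (σ j - μ) 0 else 0 with htddef
  have htd0 : ∀ j, 0 ≤ td j := by
    intro j
    simp only [htddef]
    split_ifs
    · exact le_max_right _ _
    · exact le_rfl
  -- Lhat in full inner-dimension form
  have hLhat : Lhat = U * Matrix.diagonal td * Vᵀ := by
    apply Matrix.ext
    intro i k
    have lhs1 : Lhat i k = ∑ j : Fin p,
        U i (Fin.castLE hpq j) * max (σ (Fin.castLE hpq j) - μ) 0 * V k (Fin.castLE hpq j) := by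
      show ((U.submatrix id (Fin.castLE hpq)) *
        Matrix.diagonal (fun i : Fin p => max (σ (Fin.castLE hpq i) - μ) 0) *
        (V.submatrix id (Fin.castLE hpq))ᵀ) i k = _
      rw [Matrix.mul_apply]
      refine Finset.sum_congr rfl fun j _ => ?_
      rw [Matrix.mul_diagonal, Matrix.transpose_apply, Matrix.submatrix_apply,
        Matrix.submatrix_apply, id_eq, id_eq]
    have rhs1 : (U * Matrix.diagonal td * Vᵀ) i k = ∑ j : Fin q, U i j * td j * V k j := by
      rw [Matrix.mul_apply]
      refine Finset.sum_congr rfl fun j _ => ?_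
      rw [Matrix.mul_diagonal, Matrix.transpose_apply]
    rw [lhs1, rhs1]
    have key := sum_castLE hpq (fun j : Fin q => U i j * td j * V k j)
    have key2 : ∑ j : Fin q, U i j * td j * V k j
        = ∑ j : Fin q, if (j : ℕ) < p then U i j * td j * V k j else 0 := by
      refine Finset.sum_congr rfl fun j _ => ?_
      split_ifs with h
      · rfl
      · simp [htddef, h]
    rw [key2, ← key]
    refine Finset.sum_congr rfl fun j _ => ?_
    have h1 : td (Fin.castLE hpq j) = max (σ (Fin.castLE hpq j) - μ) 0 := by
      simp only [htddef]
      rw [if_pos (show ((Fin.castLE hpq j : Fin q) : ℕ) < p from j.isLt)]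
    rw [h1]
  constructor
  · -- rank bound
    calc Lhat.rank ≤ ((U.submatrix id (Fin.castLE hpq)) *
          Matrix.diagonal (fun i : Fin p => max (σ (Fin.castLE hpq i) - μ) 0)).rank ⊓
          ((V.submatrix id (Fin.castLE hpq))ᵀ).rank := Matrix.rank_mul_le _ _
      _ ≤ ((U.submatrix id (Fin.castLE hpq)) *
          Matrix.diagonal (fun i : Fin p => max (σ (Fin.castLE hpq i) - μ) 0)).rank :=
          inf_le_left
      _ ≤ p := Matrix.rank_le_width _
  · intro L hrankL
    have hlow := lower_bound hpq μ hμ M U V σ hσ0 hσa hU hV hM L hrankL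
    -- value at Lhat
    have hsub : Lhat - M = U * Matrix.diagonal (fun j => td j - σ j) * Vᵀ := by
      rw [hLhat, hM, ← Matrix.sub_mul, ← Matrix.mul_sub, Matrix.diagonal_sub]
    have hfrobhat : frob (Lhat - M) ^ 2 = ∑ j, (td j - σ j)^2 := by
      rw [hsub]
      exact frob_sq_UDV U V _ hU hV
    have hnuchat : nuclearNorm Lhat = ∑ j, td j := by
      rw [hLhat]
      exact nuclear_UDV hqn U V td htd0 hU hV
    have hterm : ∀ j : Fin q, 1/2 * (td j - σ j)^2 + μ * td j
        ≤ 1/2 * σ j ^2 - 1/2 * (if (j:ℕ) < p then (max (σ j - μ) 0)^2 else 0) := by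
      intro j
      by_cases hj : (j : ℕ) < p
      · have h1 : td j = max (σ j - μ) 0 := by simp only [htddef]; rw [if_pos hj]
        rw [h1, if_pos hj]
        rcases max_cases (σ j - μ) 0 with ⟨h2, h3⟩ | ⟨h2, h3⟩ <;> rw [h2] <;>
          nlinarith [hμ, hσ0 j]
      · have h1 : td j = 0 := by simp only [htddef]; rw [if_neg hj]
        rw [h1, if_neg hj]
        nlinarith [hσ0 j]
    have hsumterm := Finset.sum_le_sum (fun j (_ : j ∈ Finset.univ) => hterm j)
    have e1 : ∑ j : Fin q, (1/2 * (td j - σ j)^2 + μ * td j)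
        = 1/2 * (∑ j, (td j - σ j)^2) + μ * (∑ j, td j) := by
      rw [Finset.sum_add_distrib, ← Finset.mul_sum, ← Finset.mul_sum]
    have e2 : ∑ j : Fin q, (1/2 * σ j ^2 - 1/2 * (if (j:ℕ) < p then (max (σ j - μ) 0)^2 else 0))
        = 1/2 * (∑ j, σ j ^2) - 1/2 * (∑ j : Fin q, if (j:ℕ) < p then (max (σ j - μ) 0)^2 else 0) := by
      rw [Finset.sum_sub_distrib, ← Finset.mul_sum, ← Finset.mul_sum]
    rw [e1, e2] at hsumterm
    rw [hfrobhat, hnuchat]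
    linarith [hlow, hsumterm]
end

section
/- For any L ∈ ℝ^{m×n} with rank(L) ≤ p and any M ∈ ℝ^{m×n} with singular values Σ_{11} ≥ ⋯ ≥ Σ_{qq} (q = min(m,n)), letting σ_1 ≥ ⋯ ≥ σ_p ≥ 0 be the nonzero-padded singular values of L, one has (1/2)‖L−M‖_F² + μ‖L‖_* ≥ (1/2)Σ_{i=1}^p σ_i² + (1/2)Σ_{i=1}^q Σ_{ii}² − Σ_{i=1}^p σ_i Σ_{ii} + μ Σ_{i=1}^p σ_i. -/
open Matrix Finset Filter

/- telescoping -/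
lemma tele_aux (f : ℕ → ℝ) {i q : ℕ} (h : i ≤ q) :
    ∑ k ∈ Ico i q, (f k - f (k+1)) = f i - f q := by
  induction q, h using Nat.le_induction with
  | base => simp
  | succ n hn ih => rw [Finset.sum_Ico_succ_top (by omega), ih]; ring

lemma ico_filter (i q : ℕ) (hi : i < q) :
    Ico i q = (range q).filter (fun k => i ≤ k) := by
  ext k; simp [Finset.mem_Ico, Finset.mem_filter, Finset.mem_range]; omega

/-- Abel summation step. -/
lemma stepA (q : ℕ) (s : ℕ → ℝ) (hsq : s q = 0) (g : ℕ → ℝ) :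
    ∑ i ∈ range q, s i * g i
      = ∑ k ∈ range q, (s k - s (k+1)) * ∑ i ∈ range (k+1), g i := by
  have h1 : ∀ k ∈ range q, (s k - s (k+1)) * ∑ i ∈ range (k+1), g i
      = ∑ i ∈ range q, (if i ≤ k then (s k - s (k+1)) * g i else 0) := by
    intro k hk
    have hk' := Finset.mem_range.mp hk
    rw [Finset.mul_sum, Finset.sum_ite, Finset.sum_const_zero, add_zero]
    apply Finset.sum_congr
    · ext i; simp [Finset.mem_range, Finset.mem_filter]; omega
    · intros; rfl
  rw [Finset.sum_congr rfl h1, Finset.sum_comm]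
  apply Finset.sum_congr rfl
  intro i hi
  have : ∑ k ∈ range q, (if i ≤ k then (s k - s (k+1)) * g i else 0)
      = ∑ k ∈ Ico i q, (s k - s (k+1)) * g i := by
    rw [ico_filter i q (Finset.mem_range.mp hi), Finset.sum_filter]
  rw [this, ← Finset.sum_mul, tele_aux s (le_of_lt (Finset.mem_range.mp hi)), hsq, sub_zero]

lemma stepB (q : ℕ) (t : ℕ → ℝ) (htq : t q = 0) (k : ℕ) (hk : k < q) :
    ∑ i ∈ range (k+1), t i
      = ∑ l ∈ range q, (t l - t (l+1)) * (min (k+1) (l+1) : ℕ) := by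
  have h1 : ∀ i ∈ range (k+1), t i
      = ∑ l ∈ range q, (if i ≤ l then (t l - t (l+1)) else 0) := by
    intro i hi
    have hiq : i < q := by have := Finset.mem_range.mp hi; omega
    rw [← Finset.sum_filter, ← ico_filter i q hiq, tele_aux t (le_of_lt hiq), htq, sub_zero]
  rw [Finset.sum_congr rfl h1, Finset.sum_comm]
  apply Finset.sum_congr rfl
  intro l _
  rw [Finset.sum_ite, Finset.sum_const_zero, add_zero, Finset.sum_const, nsmul_eq_mul, mul_comm]
  congr 2
  have : (range (k+1)).filter (fun i => i ≤ l) = range (min (k+1) (l+1)) := by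
    ext i; simp [Finset.mem_range, Finset.mem_filter]
  rw [this, Finset.card_range]

/-- Doubly substochastic rearrangement bound. -/
lemma abel_bound (q : ℕ) (s t : ℕ → ℝ)
    (hs : ∀ k, s (k+1) ≤ s k) (hsq : s q = 0)
    (ht : ∀ k, t (k+1) ≤ t k) (ht0 : ∀ k, 0 ≤ t k) (htq : t q = 0)
    (D : ℕ → ℕ → ℝ) (hD : ∀ i j, 0 ≤ D i j)
    (hrow : ∀ i, ∑ j ∈ range q, D i j ≤ 1)
    (hcol : ∀ j, ∑ i ∈ range q, D i j ≤ 1) :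
    ∑ i ∈ range q, ∑ j ∈ range q, s i * t j * D i j ≤ ∑ i ∈ range q, s i * t i := by
  have hL : ∑ i ∈ range q, ∑ j ∈ range q, s i * t j * D i j
      = ∑ k ∈ range q, (s k - s (k+1)) *
          ∑ l ∈ range q, (t l - t (l+1)) *
            ∑ j ∈ range (l+1), ∑ i ∈ range (k+1), D i j := by
    have e1 : ∀ i, ∑ j ∈ range q, s i * t j * D i j = s i * ∑ j ∈ range q, t j * D i j := by
      intro i; rw [Finset.mul_sum]; apply Finset.sum_congr rfl; intros; ring
    rw [Finset.sum_congr rfl (fun i _ => e1 i), stepA q s hsq]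
    apply Finset.sum_congr rfl
    intro k _
    congr 1
    rw [Finset.sum_comm]
    have e2 : ∀ j, ∑ i ∈ range (k+1), t j * D i j = t j * ∑ i ∈ range (k+1), D i j := by
      intro j; rw [Finset.mul_sum]
    rw [Finset.sum_congr rfl (fun j _ => e2 j), stepA q t htq]
  have hR : ∑ i ∈ range q, s i * t i
      = ∑ k ∈ range q, (s k - s (k+1)) *
          ∑ l ∈ range q, (t l - t (l+1)) * (min (k+1) (l+1) : ℕ) := by
    rw [stepA q s hsq t]
    apply Finset.sum_congr rfl
    intro k hk
    rw [stepB q t htq k (Finset.mem_range.mp hk)]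
  rw [hL, hR]
  apply Finset.sum_le_sum
  intro k hk
  apply mul_le_mul_of_nonneg_left _ (by linarith [hs k])
  apply Finset.sum_le_sum
  intro l hl
  apply mul_le_mul_of_nonneg_left _ (by linarith [ht l])
  -- S k l ≤ min (k+1) (l+1)
  have hk' : k < q := Finset.mem_range.mp hk
  have hl' : l < q := Finset.mem_range.mp hl
  have b1 : ∑ j ∈ range (l+1), ∑ i ∈ range (k+1), D i j ≤ (l+1 : ℝ) := by
    calc ∑ j ∈ range (l+1), ∑ i ∈ range (k+1), D i j
        ≤ ∑ j ∈ range (l+1), (1:ℝ) := by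
          apply Finset.sum_le_sum
          intro j _
          calc ∑ i ∈ range (k+1), D i j ≤ ∑ i ∈ range q, D i j :=
                Finset.sum_le_sum_of_subset_of_nonneg
                  (Finset.range_subset_range.mpr (by omega)) (fun i _ _ => hD i j)
            _ ≤ 1 := hcol j
      _ = (l+1 : ℝ) := by simp
  have b2 : ∑ j ∈ range (l+1), ∑ i ∈ range (k+1), D i j ≤ (k+1 : ℝ) := by
    rw [Finset.sum_comm]
    calc ∑ i ∈ range (k+1), ∑ j ∈ range (l+1), D i j
        ≤ ∑ i ∈ range (k+1), (1:ℝ) := by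
          apply Finset.sum_le_sum
          intro i _
          calc ∑ j ∈ range (l+1), D i j ≤ ∑ j ∈ range q, D i j :=
                Finset.sum_le_sum_of_subset_of_nonneg
                  (Finset.range_subset_range.mpr (by omega)) (fun j _ _ => hD i j)
            _ ≤ 1 := hrow i
      _ = (k+1 : ℝ) := by simp
  rcases le_total (k+1) (l+1) with h | h
  · rw [min_eq_left h]; exact_mod_cast b2
  · rw [min_eq_right h]; exact_mod_cast b1

/-- Sum of squares of a row of `Uᵀ * W` is at most 1 when both have orthonormal columns. -/
lemma row_sq_le_one {m p q : ℕ} (U : Matrix (Fin m) (Fin p) ℝ) (W : Matrix (Fin m) (Fin q) ℝ)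
    (hU : Uᵀ * U = 1) (hW : Wᵀ * W = 1) (i : Fin p) :
    ∑ j, ((Uᵀ * W) i j)^2 ≤ 1 := by
  set a : Fin q → ℝ := fun j => ∑ k, U k i * W k j with ha
  have haeq : ∀ j, (Uᵀ * W) i j = a j := by
    intro j; simp [Matrix.mul_apply, Matrix.transpose_apply, ha]
  have hc : ∑ k, (U k i)^2 = 1 := by
    have h := congrFun (congrFun hU i) i
    simp [Matrix.mul_apply, Matrix.transpose_apply, Matrix.one_apply] at h
    calc ∑ k, (U k i)^2 = ∑ k, U k i * U k i := by apply Finset.sum_congr rfl; intros; ring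
      _ = 1 := h
  have hWe : ∀ j j' : Fin q, ∑ k, W k j * W k j' = if j = j' then 1 else 0 := by
    intro j j'
    have h := congrFun (congrFun hW j) j'
    simpa [Matrix.mul_apply, Matrix.transpose_apply, Matrix.one_apply] using h
  have key : (0:ℝ) ≤ ∑ k, (U k i - ∑ j, W k j * a j)^2 :=
    Finset.sum_nonneg fun _ _ => sq_nonneg _
  have hsum1 : ∑ k, U k i * (∑ j, W k j * a j) = ∑ j, (a j)^2 := by
    have : ∀ k, U k i * (∑ j, W k j * a j) = ∑ j, a j * (U k i * W k j) := by
      intro k; rw [Finset.mul_sum]; apply Finset.sum_congr rfl; intros; ring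
    rw [Finset.sum_congr rfl (fun k _ => this k), Finset.sum_comm]
    apply Finset.sum_congr rfl
    intro j _
    rw [← Finset.mul_sum]
    have : (∑ k, U k i * W k j) = a j := rfl
    rw [this]; ring
  have hsum2 : ∑ k, (∑ j, W k j * a j)^2 = ∑ j, (a j)^2 := by
    have e : ∀ k, (∑ j, W k j * a j)^2 = ∑ j, ∑ j', (a j * a j') * (W k j * W k j') := by
      intro k
      rw [sq, Finset.sum_mul_sum]
      apply Finset.sum_congr rfl; intro j _; apply Finset.sum_congr rfl; intro j' _; ring
    rw [Finset.sum_congr rfl (fun k _ => e k), Finset.sum_comm]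
    have e2 : ∀ j : Fin q, ∑ k, ∑ j', (a j * a j') * (W k j * W k j') = (a j)^2 := by
      intro j
      rw [Finset.sum_comm]
      have e3 : ∀ j' : Fin q, ∑ k, (a j * a j') * (W k j * W k j')
          = (a j * a j') * (if j = j' then 1 else 0) := by
        intro j'; rw [← Finset.mul_sum, hWe]
      rw [Finset.sum_congr rfl (fun j' _ => e3 j')]
      simp [sq]
    exact Finset.sum_congr rfl (fun j _ => e2 j)
  have expand : ∑ k, (U k i - ∑ j, W k j * a j)^2
      = ∑ k, (U k i)^2 - 2 * ∑ k, U k i * (∑ j, W k j * a j)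
        + ∑ k, (∑ j, W k j * a j)^2 := by
    rw [Finset.mul_sum, ← Finset.sum_sub_distrib, ← Finset.sum_add_distrib]
    apply Finset.sum_congr rfl; intros; ring
  have goal_eq : ∑ j, ((Uᵀ * W) i j)^2 = ∑ j, (a j)^2 :=
    Finset.sum_congr rfl (fun j _ => by rw [haeq j])
  rw [goal_eq]
  rw [expand, hsum1, hsum2, hc] at key
  linarith

lemma sumsq_eq_trace {m n : ℕ} (L : Matrix (Fin m) (Fin n) ℝ) :
    ∑ i, ∑ j, (L i j)^2 = Matrix.trace (L * Lᵀ) := by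
  simp [Matrix.trace, Matrix.diag, Matrix.mul_apply, Matrix.transpose_apply, sq]

lemma sumprod_eq_trace {m n : ℕ} (L M : Matrix (Fin m) (Fin n) ℝ) :
    ∑ i, ∑ j, L i j * M i j = Matrix.trace (L * Mᵀ) := by
  simp [Matrix.trace, Matrix.diag, Matrix.mul_apply, Matrix.transpose_apply]

lemma frob_sq_of_svd {m n p : ℕ} (σ : Fin p → ℝ)
    (U : Matrix (Fin m) (Fin p) ℝ) (V : Matrix (Fin n) (Fin p) ℝ)
    (hU : Uᵀ * U = 1) (hV : Vᵀ * V = 1) :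
    ∑ i, ∑ j, ((U * Matrix.diagonal σ * Vᵀ) i j)^2 = ∑ i, σ i ^ 2 := by
  rw [sumsq_eq_trace]
  have ht : (U * Matrix.diagonal σ * Vᵀ)ᵀ = V * (Matrix.diagonal σ * Uᵀ) := by
    rw [Matrix.transpose_mul, Matrix.transpose_mul, Matrix.transpose_transpose,
      Matrix.diagonal_transpose]
  rw [ht]
  have h2 : (U * Matrix.diagonal σ * Vᵀ) * (V * (Matrix.diagonal σ * Uᵀ))
      = (U * Matrix.diagonal σ) * (Matrix.diagonal σ * Uᵀ) := by
    rw [Matrix.mul_assoc (U * Matrix.diagonal σ), ← Matrix.mul_assoc Vᵀ, hV, Matrix.one_mul]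
  rw [h2, Matrix.trace_mul_comm]
  have h3 : (Matrix.diagonal σ * Uᵀ) * (U * Matrix.diagonal σ)
      = Matrix.diagonal σ * Matrix.diagonal σ := by
    rw [Matrix.mul_assoc, ← Matrix.mul_assoc Uᵀ, hU, Matrix.one_mul]
  rw [h3, Matrix.diagonal_mul_diagonal, Matrix.trace_diagonal]
  apply Finset.sum_congr rfl; intros; simp [sq]

lemma trace_dadb {p q : ℕ} (σ : Fin p → ℝ) (Sig : Fin q → ℝ)
    (A : Matrix (Fin p) (Fin q) ℝ) (B : Matrix (Fin q) (Fin p) ℝ) :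
    Matrix.trace (Matrix.diagonal σ * A * Matrix.diagonal Sig * B)
      = ∑ i, ∑ j, (σ i * Sig j) * (A i j * B j i) := by
  have h1 : Matrix.diagonal σ * A * Matrix.diagonal Sig
      = Matrix.of (fun i j => σ i * A i j * Sig j) := by
    ext i j
    rw [Matrix.mul_diagonal, Matrix.diagonal_mul]
    rfl
  rw [h1]
  simp only [Matrix.trace, Matrix.diag, Matrix.mul_apply, Matrix.of_apply]
  apply Finset.sum_congr rfl; intro i _
  apply Finset.sum_congr rfl; intro j _
  ring

lemma cross_trace {m n p q : ℕ} (σ : Fin p → ℝ) (Sig : Fin q → ℝ)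
    (U : Matrix (Fin m) (Fin p) ℝ) (V : Matrix (Fin n) (Fin p) ℝ)
    (U' : Matrix (Fin m) (Fin q) ℝ) (V' : Matrix (Fin n) (Fin q) ℝ) :
    ∑ i, ∑ j, (U * Matrix.diagonal σ * Vᵀ) i j * (U' * Matrix.diagonal Sig * V'ᵀ) i j
      = ∑ i, ∑ j, (σ i * Sig j) * ((Vᵀ * V') i j * ((U')ᵀ * U) j i) := by
  rw [sumprod_eq_trace]
  have ht : (U' * Matrix.diagonal Sig * V'ᵀ)ᵀ = V' * (Matrix.diagonal Sig * (U')ᵀ) := by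
    rw [Matrix.transpose_mul, Matrix.transpose_mul, Matrix.transpose_transpose,
      Matrix.diagonal_transpose]
  rw [ht]
  have h2 : (U * Matrix.diagonal σ * Vᵀ) * (V' * (Matrix.diagonal Sig * (U')ᵀ))
      = U * (Matrix.diagonal σ * (Vᵀ * V') * Matrix.diagonal Sig * (U')ᵀ) := by
    simp only [Matrix.mul_assoc]
  rw [h2, Matrix.trace_mul_comm]
  have h3 : (Matrix.diagonal σ * (Vᵀ * V') * Matrix.diagonal Sig * (U')ᵀ) * U
      = Matrix.diagonal σ * (Vᵀ * V') * Matrix.diagonal Sig * ((U')ᵀ * U) := by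
    simp only [Matrix.mul_assoc]
  rw [h3, trace_dadb]

/-- Lower bound for the rank-constrained nuclear-norm proximal objective: if `L` has
singular values `σ₁ ≥ ⋯ ≥ σ_p ≥ 0` (so `rank L ≤ p`) and `M` has singular values
`Σ₁₁ ≥ ⋯ ≥ Σqq` with `q = min(m,n)`, then
`(1/2)‖L−M‖_F² + μ‖L‖_* ≥ (1/2)∑σᵢ² + (1/2)∑Σᵢᵢ² − ∑σᵢΣᵢᵢ + μ∑σᵢ`. -/
theorem prox_objective_lower_bound {m n p q : ℕ}
    (hq : q = min m n) (hpq : p ≤ q) (μ : ℝ) (hμ : 0 ≤ μ)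
    (L M : Matrix (Fin m) (Fin n) ℝ)
    (σ : Fin p → ℝ) (Sig : Fin q → ℝ)
    (hL : HasSVD L σ) (hM : HasSVD M Sig) :
    (1/2) * frob (L - M) ^ 2 + μ * (∑ i, σ i) ≥
      (1/2) * ∑ i, σ i ^ 2 + (1/2) * ∑ i, Sig i ^ 2
        - (∑ i : Fin p, σ i * Sig (Fin.castLE hpq i)) + μ * ∑ i, σ i := by
  obtain ⟨hσ0, hσa, U, V, hU, hV, hLe⟩ := hL
  obtain ⟨hS0, hSa, U', V', hU', hV', hMe⟩ := hM
  -- Frobenius norm squared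
  have hfrob : frob (L - M) ^ 2 = ∑ i, ∑ j, ((L - M) i j)^2 :=
    Real.sq_sqrt (Finset.sum_nonneg fun i _ =>
      Finset.sum_nonneg fun j _ => sq_nonneg _)
  have hexp : ∑ i, ∑ j, ((L - M) i j)^2
      = (∑ i, ∑ j, (L i j)^2) + (∑ i, ∑ j, (M i j)^2)
        - 2 * ∑ i, ∑ j, L i j * M i j := by
    simp only [Finset.mul_sum, ← Finset.sum_add_distrib, ← Finset.sum_sub_distrib]
    apply Finset.sum_congr rfl; intro i _
    apply Finset.sum_congr rfl; intro j _
    simp [Matrix.sub_apply]; ring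
  have hLsq : ∑ i, ∑ j, (L i j)^2 = ∑ i, σ i ^ 2 := by
    rw [hLe]; exact frob_sq_of_svd σ U V hU hV
  have hMsq : ∑ i, ∑ j, (M i j)^2 = ∑ i, Sig i ^ 2 := by
    rw [hMe]; exact frob_sq_of_svd Sig U' V' hU' hV'
  -- the cross term
  set A : Matrix (Fin p) (Fin q) ℝ := Vᵀ * V' with hA_def
  set B : Matrix (Fin q) (Fin p) ℝ := (U')ᵀ * U with hB_def
  have hinner : ∑ i, ∑ j, L i j * M i j
      = ∑ i : Fin p, ∑ j : Fin q, (σ i * Sig j) * (A i j * B j i) := by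
    rw [hLe, hMe]; exact cross_trace σ Sig U V U' V'
  -- orthogonality bounds
  have hA_row : ∀ i : Fin p, ∑ j, (A i j)^2 ≤ 1 := row_sq_le_one V V' hV hV'
  have hB_row : ∀ j : Fin q, ∑ i, (B j i)^2 ≤ 1 := row_sq_le_one U' U hU' hU
  have hB_col : ∀ i : Fin p, ∑ j, (B j i)^2 ≤ 1 := by
    intro i
    have he : ∀ j : Fin q, B j i = (Uᵀ * U') i j := by
      intro j
      simp only [hB_def, Matrix.mul_apply, Matrix.transpose_apply]
      apply Finset.sum_congr rfl; intros; ring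
    calc ∑ j, (B j i)^2 = ∑ j, ((Uᵀ * U') i j)^2 :=
          Finset.sum_congr rfl (fun j _ => by rw [he j])
      _ ≤ 1 := row_sq_le_one U U' hU hU' i
  have hA_col : ∀ j : Fin q, ∑ i, (A i j)^2 ≤ 1 := by
    intro j
    have he : ∀ i : Fin p, A i j = ((V')ᵀ * V) j i := by
      intro i
      simp only [hA_def, Matrix.mul_apply, Matrix.transpose_apply]
      apply Finset.sum_congr rfl; intros; ring
    calc ∑ i, (A i j)^2 = ∑ i, (((V')ᵀ * V) j i)^2 :=
          Finset.sum_congr rfl (fun i _ => by rw [he i])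
      _ ≤ 1 := row_sq_le_one V' V hV' hV j
  -- step 1: AM-GM termwise
  have hstep1 : ∑ i : Fin p, ∑ j : Fin q, (σ i * Sig j) * (A i j * B j i)
      ≤ ∑ i : Fin p, ∑ j : Fin q, (σ i * Sig j) * ((A i j ^2 + B j i ^2)/2) := by
    apply Finset.sum_le_sum; intro i _
    apply Finset.sum_le_sum; intro j _
    apply mul_le_mul_of_nonneg_left _ (mul_nonneg (hσ0 i) (hS0 j))
    nlinarith [sq_nonneg (A i j - B j i)]
  -- step 2: substochastic rearrangement via padded sequences
  set s : ℕ → ℝ := fun i => if h : i < p then σ ⟨i, h⟩ else 0 with hs_def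
  set t : ℕ → ℝ := fun j => if h : j < q then Sig ⟨j, h⟩ else 0 with ht_def
  set E : ℕ → ℕ → ℝ := fun i j =>
    if h : i < p ∧ j < q then (A ⟨i, h.1⟩ ⟨j, h.2⟩ ^2 + B ⟨j, h.2⟩ ⟨i, h.1⟩ ^2)/2 else 0
    with hE_def
  have hs_anti : ∀ k, s (k+1) ≤ s k := by
    intro k
    simp only [hs_def]
    by_cases h1 : k + 1 < p
    · rw [dif_pos h1, dif_pos (by omega)]
      exact hσa (by simp only [Fin.le_def]; omega)
    · rw [dif_neg h1]
      by_cases h2 : k < p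
      · rw [dif_pos h2]; exact hσ0 _
      · rw [dif_neg h2]
  have ht_anti : ∀ k, t (k+1) ≤ t k := by
    intro k
    simp only [ht_def]
    by_cases h1 : k + 1 < q
    · rw [dif_pos h1, dif_pos (by omega)]
      exact hSa (by simp only [Fin.le_def]; omega)
    · rw [dif_neg h1]
      by_cases h2 : k < q
      · rw [dif_pos h2]; exact hS0 _
      · rw [dif_neg h2]
  have ht0 : ∀ k, 0 ≤ t k := by
    intro k; simp only [ht_def]
    by_cases h : k < q
    · rw [dif_pos h]; exact hS0 _
    · rw [dif_neg h]
  have hsq0 : s q = 0 := by simp only [hs_def]; rw [dif_neg (by omega)]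
  have htq0 : t q = 0 := by simp only [ht_def]; rw [dif_neg (by omega)]
  have hE0 : ∀ i j, 0 ≤ E i j := by
    intro i j; simp only [hE_def]
    by_cases h : i < p ∧ j < q
    · rw [dif_pos h]; positivity
    · rw [dif_neg h]
  have hrow : ∀ i, ∑ j ∈ range q, E i j ≤ 1 := by
    intro i
    by_cases hi : i < p
    · have : ∑ j ∈ range q, E i j
          = ∑ j : Fin q, (A ⟨i, hi⟩ j ^2 + B j ⟨i, hi⟩ ^2)/2 := by
        rw [← Fin.sum_univ_eq_sum_range (fun j => E i j) q]
        apply Finset.sum_congr rfl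
        intro j _
        simp only [hE_def]
        rw [dif_pos ⟨hi, j.isLt⟩]
      rw [this]
      rw [show (∑ j : Fin q, (A ⟨i, hi⟩ j ^2 + B j ⟨i, hi⟩ ^2)/2)
          = ((∑ j : Fin q, A ⟨i, hi⟩ j ^2) + ∑ j : Fin q, B j ⟨i, hi⟩ ^2)/2 by
        rw [← Finset.sum_add_distrib, Finset.sum_div]]
      linarith [hA_row ⟨i, hi⟩, hB_col ⟨i, hi⟩]
    · have : ∑ j ∈ range q, E i j = 0 := by
        apply Finset.sum_eq_zero; intro j _
        simp only [hE_def]; rw [dif_neg (by tauto)]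
      rw [this]; norm_num
  have hcol : ∀ j, ∑ i ∈ range q, E i j ≤ 1 := by
    intro j
    by_cases hj : j < q
    · have : ∑ i ∈ range q, E i j
          = ∑ i ∈ range p, E i j := by
        symm
        apply Finset.sum_subset (Finset.range_subset_range.mpr hpq)
        intro i _ hi
        simp only [hE_def]
        rw [dif_neg (by simp at hi; omega)]
      rw [this]
      have h2 : ∑ i ∈ range p, E i j
          = ∑ i : Fin p, (A i ⟨j, hj⟩ ^2 + B ⟨j, hj⟩ i ^2)/2 := by
        rw [← Fin.sum_univ_eq_sum_range (fun i => E i j) p]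
        apply Finset.sum_congr rfl
        intro i _
        simp only [hE_def]
        rw [dif_pos ⟨i.isLt, hj⟩]
      rw [h2]
      rw [show (∑ i : Fin p, (A i ⟨j, hj⟩ ^2 + B ⟨j, hj⟩ i ^2)/2)
          = ((∑ i : Fin p, A i ⟨j, hj⟩ ^2) + ∑ i : Fin p, B ⟨j, hj⟩ i ^2)/2 by
        rw [← Finset.sum_add_distrib, Finset.sum_div]]
      linarith [hA_col ⟨j, hj⟩, hB_row ⟨j, hj⟩]
    · have : ∑ i ∈ range q, E i j = 0 := by
        apply Finset.sum_eq_zero; intro i _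
        simp only [hE_def]; rw [dif_neg (by tauto)]
      rw [this]; norm_num
  have habel := abel_bound q s t hs_anti hsq0 ht_anti ht0 htq0 E hE0 hrow hcol
  -- convert the abel bound to Fin sums
  have hconvL : ∑ i ∈ range q, ∑ j ∈ range q, s i * t j * E i j
      = ∑ i : Fin p, ∑ j : Fin q, (σ i * Sig j) * ((A i j ^2 + B j i ^2)/2) := by
    have houter : ∑ i ∈ range q, ∑ j ∈ range q, s i * t j * E i j
        = ∑ i ∈ range p, ∑ j ∈ range q, s i * t j * E i j := by
      symm
      apply Finset.sum_subset (Finset.range_subset_range.mpr hpq)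
      intro i _ hi
      apply Finset.sum_eq_zero; intro j _
      have : s i = 0 := by simp only [hs_def]; rw [dif_neg (by simp at hi; omega)]
      rw [this]; ring
    rw [houter, ← Fin.sum_univ_eq_sum_range (fun i => ∑ j ∈ range q, s i * t j * E i j) p]
    apply Finset.sum_congr rfl
    intro i _
    rw [← Fin.sum_univ_eq_sum_range (fun j => s ↑i * t j * E ↑i j) q]
    apply Finset.sum_congr rfl
    intro j _
    simp only [hs_def, ht_def, hE_def]
    rw [dif_pos i.isLt, dif_pos j.isLt, dif_pos ⟨i.isLt, j.isLt⟩]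
  have hconvR : ∑ i ∈ range q, s i * t i
      = ∑ i : Fin p, σ i * Sig (Fin.castLE hpq i) := by
    have houter : ∑ i ∈ range q, s i * t i = ∑ i ∈ range p, s i * t i := by
      symm
      apply Finset.sum_subset (Finset.range_subset_range.mpr hpq)
      intro i _ hi
      have : s i = 0 := by simp only [hs_def]; rw [dif_neg (by simp at hi; omega)]
      rw [this]; ring
    rw [houter, ← Fin.sum_univ_eq_sum_range (fun i => s i * t i) p]
    apply Finset.sum_congr rfl
    intro i _
    simp only [hs_def, ht_def]
    rw [dif_pos i.isLt, dif_pos (lt_of_lt_of_le i.isLt hpq)]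
    rfl
  rw [hconvL, hconvR] at habel
  -- combine
  have hbound : ∑ i, ∑ j, L i j * M i j ≤ ∑ i : Fin p, σ i * Sig (Fin.castLE hpq i) := by
    rw [hinner]
    exact le_trans hstep1 habel
  rw [ge_iff_le, hfrob, hexp, hLsq, hMsq]
  linarith
end

section
/- With 𝒜 = identity and stepsize t = 1, the forward-backward iteration L^{k+1} = prox_{μ}(L^k − f_λ'(L^k − D)) (where f_λ' is applied entrywise and prox is over rank ≤ p matrices) coincides with the alternating minimization update: L^{k+1} = argmin over rank(L) ≤ p of (1/2)‖L + S^{k+1} − D‖_F² + μ‖L‖_*, where S^{k+1} = sign(D − L^k)·max(0, |D − L^k| − λ). -/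
open Matrix Finset Filter

lemma sign_mul_abs' (x : ℝ) : Real.sign x * |x| = x := by
  rcases lt_trichotomy x 0 with h | h | h
  · rw [Real.sign_of_neg h, abs_of_neg h]; ring
  · simp [h]
  · rw [Real.sign_of_pos h, abs_of_pos h]; ring

lemma key (x lam : ℝ) :
    x - Real.sign x * min lam |x| = -(Real.sign (-x) * max 0 (|x| - lam)) := by
  rw [Real.sign_neg, neg_mul, neg_neg]
  nth_rewrite 1 [← sign_mul_abs' x]
  rw [← mul_sub]
  congr 1
  rcases le_total lam |x| with h | h
  · rw [min_eq_left h, max_eq_right (by linarith)]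
  · rw [min_eq_right h, max_eq_left (by linarith)]; ring

/-- With `𝒜 = I` and `t = 1`, the forward-backward update coincides with the alternating
minimization update: the two rank-constrained proximal subproblems have the same minimizers. -/
theorem forward_backward_eq_alternating {m n p : ℕ}
    (Lk D : Matrix (Fin m) (Fin n) ℝ) (lam mu : ℝ) (hlam : 0 < lam) (hmu : 0 ≤ mu) :
    let Snew : Matrix (Fin m) (Fin n) ℝ :=
      Matrix.of fun i j => Real.sign (D i j - Lk i j) * max 0 (|D i j - Lk i j| - lam)
    let G : Matrix (Fin m) (Fin n) ℝ :=
      Matrix.of fun i j => Real.sign (Lk i j - D i j) * min lam |Lk i j - D i j|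
    ∀ Lnew : Matrix (Fin m) (Fin n) ℝ,
      (Lnew.rank ≤ p ∧
        ∀ Z : Matrix (Fin m) (Fin n) ℝ, Z.rank ≤ p →
          (1/2) * frob (Lnew - (Lk - G)) ^ 2 + mu * nuclearNorm Lnew ≤
            (1/2) * frob (Z - (Lk - G)) ^ 2 + mu * nuclearNorm Z) ↔
      (Lnew.rank ≤ p ∧
        ∀ Z : Matrix (Fin m) (Fin n) ℝ, Z.rank ≤ p →
          (1/2) * frob (Lnew + Snew - D) ^ 2 + mu * nuclearNorm Lnew ≤
            (1/2) * frob (Z + Snew - D) ^ 2 + mu * nuclearNorm Z) := by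
  intro Snew G Lnew
  have hmat : ∀ W : Matrix (Fin m) (Fin n) ℝ, W - (Lk - G) = W + Snew - D := by
    intro W
    ext i j
    simp only [Matrix.sub_apply, Matrix.add_apply, Matrix.of_apply, Snew, G]
    have := key (Lk i j - D i j) lam
    rw [neg_sub] at this
    rw [abs_sub_comm (D i j) (Lk i j)]
    linarith
  constructor <;> rintro ⟨h1, h2⟩ <;> refine ⟨h1, fun Z hZ => ?_⟩
  · rw [← hmat Lnew, ← hmat Z]; exact h2 Z hZ
  · rw [hmat Lnew, hmat Z]; exact h2 Z hZ
end
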